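/- Let k > 0 and ν ≥ μ > −k. Then the function x ↦ 𝓘^k_μ(x) / 𝓘^k_ν(x) is monotonically increasing on (0, ∞). -/

import Mathlib

/-!
If `aₙ ≥ 0`, `bₙ > 0` and `aₙ / bₙ` increases, then `t ↦ (∑ aₙ tⁿ) / (∑ bₙ tⁿ)` increases on
`[0, ∞)`: for `0 ≤ x ≤ y`, the difference of the Cauchy products
`(∑ aₙ yⁿ)(∑ bₙ xⁿ) - (∑ aₙ xⁿ)(∑ bₙ yⁿ)` symmetrizes to
`½ ∑_{r,s} (a_r b_s - a_s b_r)(x^s y^r - x^r y^s)`, whose terms are nonnegative.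
The k-Bessel coefficients satisfy `f_{r+1}(ν) = f_r(ν) / (4 (r + 1) (r k + ν + k))`,
so `f_r(μ) / f_r(ν)` increases in `r` when `μ ≤ ν`; apply this with `t = x²`.
-/

open Real

/-- The k-gamma function, `Γ_k(x) = k^(x/k - 1) * Γ(x/k)`. -/
noncomputable def kGamma (k x : ℝ) : ℝ := k ^ (x / k - 1) * Real.Gamma (x / k)

/-- The normalized modified k-Bessel function `𝓘^k_ν(x) = Σ f_r(ν) x^(2r)`. -/
noncomputable def kBesselI (k ν x : ℝ) : ℝ :=
  ∑' r : ℕ, kGamma k (ν + k) / (kGamma k (r * k + ν + k) * 4 ^ r * (r.factorial : ℝ)) *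
    x ^ (2 * r)

theorem tsum_le_tsum_of_add_swap_le {β : Type*} {f g : β × β → ℝ} (hf : Summable f)
    (hg : Summable g) (h : ∀ p, f p + f p.swap ≤ g p + g p.swap) : ∑' p, f p ≤ ∑' p, g p := by
  have tsum_swap (φ : β × β → ℝ) : ∑' p : β × β, φ p.swap = ∑' p, φ p :=
    (Equiv.prodComm β β).tsum_eq φ
  have hf' : Summable fun p : β × β => f p.swap := (Equiv.prodComm β β).summable_iff.mpr hf
  have hg' : Summable fun p : β × β => g p.swap := (Equiv.prodComm β β).summable_iff.mpr hg
  have := Summable.tsum_le_tsum h (hf.add hf') (hg.add hg')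
  rw [hf.tsum_add hf', hg.tsum_add hg', tsum_swap, tsum_swap] at this
  linarith

theorem pow_mul_pow_le_pow_mul_pow {x y : ℝ} (hx : 0 ≤ x) (hxy : x ≤ y) {s r : ℕ} (hsr : s ≤ r) :
    x ^ r * y ^ s ≤ x ^ s * y ^ r := by
  obtain ⟨d, rfl⟩ := Nat.exists_eq_add_of_le hsr
  have hd : x ^ d ≤ y ^ d := pow_le_pow_left₀ hx hxy d
  have hy : 0 ≤ y := hx.trans hxy
  rw [pow_add, pow_add]
  linear_combination (x ^ s * y ^ s) * hd

section MonotoneCoeffRatio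

variable {a b : ℕ → ℝ}

theorem tsum_mul_tsum_le_of_monotone_div (ha : ∀ n, 0 ≤ a n) (hb : ∀ n, 0 < b n)
    (hab : Monotone fun n => a n / b n) {x y : ℝ} (hx : 0 ≤ x) (hxy : x ≤ y)
    (hay : Summable fun n => a n * y ^ n) (hby : Summable fun n => b n * y ^ n) :
    (∑' n, a n * x ^ n) * (∑' n, b n * y ^ n) ≤ (∑' n, a n * y ^ n) * (∑' n, b n * x ^ n) := by
  have summable_at_x {c : ℕ → ℝ} (hc : ∀ n, 0 ≤ c n) (hcy : Summable fun n => c n * y ^ n) :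
      Summable fun n => c n * x ^ n :=
    hcy.of_nonneg_of_le (fun n => mul_nonneg (hc n) (pow_nonneg hx n))
      (fun n => mul_le_mul_of_nonneg_left (pow_le_pow_left₀ hx hxy n) (hc n))
  have hax := summable_at_x ha hay
  have hbx := summable_at_x (fun n => (hb n).le) hby
  have hy := hx.trans hxy
  have terms_nonneg (c : ℕ → ℝ) (hc : ∀ n, 0 ≤ c n) (z : ℝ) (hz : 0 ≤ z) :
      0 ≤ fun n => c n * z ^ n := fun n => mul_nonneg (hc n) (pow_nonneg hz n)
  have hb' (n : ℕ) : 0 ≤ b n := (hb n).le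
  have hxy_pairs : Summable fun p : ℕ × ℕ => a p.1 * x ^ p.1 * (b p.2 * y ^ p.2) :=
    hax.mul_of_nonneg hby (terms_nonneg a ha x hx) (terms_nonneg b hb' y hy)
  have hyx_pairs : Summable fun p : ℕ × ℕ => a p.1 * y ^ p.1 * (b p.2 * x ^ p.2) :=
    hay.mul_of_nonneg hbx (terms_nonneg a ha y hy) (terms_nonneg b hb' x hx)
  rw [hax.tsum_mul_tsum hby hxy_pairs, hay.tsum_mul_tsum hbx hyx_pairs]
  refine tsum_le_tsum_of_add_swap_le hxy_pairs hyx_pairs ?_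
  rintro ⟨r, s⟩
  have cross {s r : ℕ} (h : s ≤ r) : a s * b r ≤ a r * b s :=
    (div_le_div_iff₀ (hb s) (hb r)).1 (hab h)
  have key : 0 ≤ (a r * b s - a s * b r) * (x ^ s * y ^ r - x ^ r * y ^ s) := by
    rcases le_total s r with h | h
    · exact mul_nonneg (sub_nonneg.2 (cross h))
        (sub_nonneg.2 (pow_mul_pow_le_pow_mul_pow hx hxy h))
    · exact mul_nonneg_of_nonpos_of_nonpos (sub_nonpos.2 (cross h))
        (sub_nonpos.2 (pow_mul_pow_le_pow_mul_pow hx hxy h))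
  dsimp only [Prod.swap_prod_mk]
  linear_combination key

theorem monotoneOn_tsum_div_tsum_of_monotone_div (ha : ∀ n, 0 ≤ a n) (hb : ∀ n, 0 < b n)
    (hab : Monotone fun n => a n / b n) (hsa : ∀ t, 0 ≤ t → Summable fun n => a n * t ^ n)
    (hsb : ∀ t, 0 ≤ t → Summable fun n => b n * t ^ n) :
    MonotoneOn (fun t => (∑' n, a n * t ^ n) / ∑' n, b n * t ^ n) (Set.Ici 0) := by
  have denom_pos {t : ℝ} (ht : 0 ≤ t) : 0 < ∑' n, b n * t ^ n :=
    (hsb t ht).tsum_pos (fun n => mul_nonneg (hb n).le (pow_nonneg ht n)) 0 (by simpa using hb 0)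
  intro x hx y hy hxy
  rw [div_le_div_iff₀ (denom_pos hx) (denom_pos hy)]
  exact tsum_mul_tsum_le_of_monotone_div ha hb hab hx hxy (hsa y hy) (hsb y hy)

end MonotoneCoeffRatio

theorem kGamma_pos {k x : ℝ} (hk : 0 < k) (hx : 0 < x) : 0 < kGamma k x :=
  mul_pos (rpow_pos_of_pos hk _) (Gamma_pos_of_pos (div_pos hx hk))

theorem kGamma_add_self {k x : ℝ} (hk : 0 < k) (hx : x ≠ 0) :
    kGamma k (x + k) = x * kGamma k x := by
  have hxk : x / k ≠ 0 := div_ne_zero hx hk.ne'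
  rw [kGamma, kGamma, add_div, div_self hk.ne', Gamma_add_one hxk, add_sub_cancel_right,
    ← sub_add_cancel (x / k) 1, rpow_add_one hk.ne', sub_add_cancel]
  field_simp

noncomputable def kBesselCoeff (k ν : ℝ) (r : ℕ) : ℝ :=
  kGamma k (ν + k) / (kGamma k (r * k + ν + k) * 4 ^ r * (r.factorial : ℝ))

theorem kBesselI_eq_tsum_sq_pow (k ν x : ℝ) :
    kBesselI k ν x = ∑' r, kBesselCoeff k ν r * (x ^ 2) ^ r := by
  simp only [← pow_mul]
  rfl

section kBesselCoeff

variable {k ν : ℝ}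

theorem natCast_mul_add_add_pos (hk : 0 < k) (hν : -k < ν) (n : ℕ) : 0 < n * k + ν + k := by
  have : 0 ≤ (n : ℝ) * k := by positivity
  linarith

theorem kBesselCoeff_zero (hk : 0 < k) (hν : -k < ν) : kBesselCoeff k ν 0 = 1 := by
  have hΓ := (kGamma_pos hk (neg_lt_iff_pos_add.1 hν)).ne'
  simp [kBesselCoeff, hΓ]

theorem kBesselCoeff_succ (hk : 0 < k) (hν : -k < ν) (n : ℕ) :
    kBesselCoeff k ν (n + 1) = kBesselCoeff k ν n / ((n * k + ν + k) * (4 * (n + 1))) := by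
  have hpos := natCast_mul_add_add_pos hk hν n
  have hcast : ((n + 1 : ℕ) : ℝ) * k + ν + k = (n * k + ν + k) + k := by push_cast; ring
  rw [kBesselCoeff, kBesselCoeff, hcast, kGamma_add_self hk hpos.ne', pow_succ,
    Nat.factorial_succ, div_div]
  push_cast
  ring

theorem kBesselCoeff_pos (hk : 0 < k) (hν : -k < ν) (r : ℕ) : 0 < kBesselCoeff k ν r := by
  induction r with
  | zero => simp [kBesselCoeff_zero hk hν]
  | succ n ih =>
    rw [kBesselCoeff_succ hk hν]
    have := natCast_mul_add_add_pos hk hν n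
    positivity

theorem kBesselCoeff_le (hk : 0 < k) (hν : -k < ν) (r : ℕ) :
    kBesselCoeff k ν r ≤ (4 * (ν + k))⁻¹ ^ r / r.factorial := by
  have hνk : 0 < ν + k := neg_lt_iff_pos_add.1 hν
  induction r with
  | zero => simp [kBesselCoeff_zero hk hν]
  | succ n ih =>
    have hle : (ν + k) * (4 * (n + 1)) ≤ (n * k + ν + k) * (4 * (n + 1)) := by
      have : 0 ≤ (n : ℝ) * k := by positivity
      gcongr
      linarith
    calc kBesselCoeff k ν (n + 1)
        ≤ (4 * (ν + k))⁻¹ ^ n / n.factorial / ((ν + k) * (4 * (n + 1))) := by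
          rw [kBesselCoeff_succ hk hν]
          exact div_le_div₀ (by positivity) ih (by positivity) hle
      _ = (4 * (ν + k))⁻¹ ^ (n + 1) / (n + 1).factorial := by
          rw [Nat.factorial_succ, pow_succ]
          push_cast
          field_simp

theorem kBesselCoeff_summable (hk : 0 < k) (hν : -k < ν) (t : ℝ) :
    Summable fun r => kBesselCoeff k ν r * t ^ r := by
  refine (summable_pow_div_factorial (|t| * (4 * (ν + k))⁻¹)).of_norm_bounded fun r => ?_
  rw [norm_mul, norm_pow, norm_of_nonneg (kBesselCoeff_pos hk hν r).le, mul_pow,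
    norm_eq_abs, mul_div_assoc, mul_comm]
  exact mul_le_mul_of_nonneg_left (kBesselCoeff_le hk hν r) (by positivity)

theorem monotone_kBesselCoeff_div {μ : ℝ} (hk : 0 < k) (hμ : -k < μ) (hμν : μ ≤ ν) :
    Monotone fun r => kBesselCoeff k μ r / kBesselCoeff k ν r := by
  have hν : -k < ν := hμ.trans_le hμν
  refine monotone_nat_of_le_succ fun n => ?_
  have hμ_pos := natCast_mul_add_add_pos hk hμ n
  have hν_pos := natCast_mul_add_add_pos hk hν n
  have hcμ := kBesselCoeff_pos hk hμ n
  have hcν := kBesselCoeff_pos hk hν n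
  rw [kBesselCoeff_succ hk hμ, kBesselCoeff_succ hk hν,
    div_le_div_iff₀ (by positivity) (by positivity), ← mul_div_assoc, div_mul_eq_mul_div]
  exact div_le_div_of_nonneg_left (by positivity) (by positivity) (by gcongr)

end kBesselCoeff

theorem kBesselI_ratio_monotone (k μ ν : ℝ) (hk : 0 < k) (hμ : -k < μ) (hμν : μ ≤ ν) :
    MonotoneOn (fun x : ℝ => kBesselI k μ x / kBesselI k ν x) (Set.Ioi (0 : ℝ)) := by
  have hν : -k < ν := hμ.trans_le hμν
  have hratio := monotoneOn_tsum_div_tsum_of_monotone_div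
    (fun n => (kBesselCoeff_pos hk hμ n).le) (kBesselCoeff_pos hk hν)
    (monotone_kBesselCoeff_div hk hμ hμν)
    (fun t _ => kBesselCoeff_summable hk hμ t) (fun t _ => kBesselCoeff_summable hk hν t)
  have hsq : MonotoneOn (fun x : ℝ => x ^ 2) (Set.Ioi 0) :=
    fun x hx _ _ hxy => pow_le_pow_left₀ (le_of_lt hx) hxy 2
  simpa only [Function.comp_def, kBesselI_eq_tsum_sq_pow] using
    hratio.comp hsq fun x _ => sq_nonneg x
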